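/- Let r be a W-valued 1-form on ℝ^{2n}, D = −δ + d + (i/ℏ)[r,·], and let ũ be a W-valued 0-form with Dũ = 0. Set ρ(ũ) = (ℏ/i)·∂ũ/∂ℏ + Eũ and K_0 = −( Er − iℏ·∂r/∂ℏ + i r + (i/2) Σ_{i,j} ω_{ij} y^i dx^j ). Then D(ρ(ũ)) = (i/ℏ)[K_0, ũ]. -/

import Mathlib

/-!  Common definitions: formal Weyl algebras, Moyal products, Weyl-bundle valued
differential forms on ℝ^{2n}, Fedosov connections, star-products on smooth functions,
multidifferential operators and Hochschild coboundaries.  -/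

noncomputable section
namespace StarPaper

open scoped BigOperators

/-! ### Formal power series in y -/

/-- The fiber coefficient ring `ℂ[[y^1, …, y^N]]`. -/
abbrev Wc (N : ℕ) := MvPowerSeries (Fin N) ℂ

/-- Build a formal power series from its coefficient function. -/
def Wc.mk {N : ℕ} (f : (Fin N →₀ ℕ) → ℂ) : Wc N := f

/-- Formal partial derivative `∂/∂y^i` on `ℂ[[y]]`. -/
def yD {N : ℕ} (i : Fin N) (a : Wc N) : Wc N :=
  Wc.mk fun β => ((β i : ℂ) + 1) * MvPowerSeries.coeff (R := ℂ) (β + Finsupp.single i 1) a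

/-- Formal iterated partial derivative `∂^α` on `ℂ[[y]]`. -/
def yDM {N : ℕ} (α : Fin N →₀ ℕ) (a : Wc N) : Wc N :=
  Wc.mk fun β =>
    (∏ i : Fin N, (((β i + α i).factorial : ℂ) / ((β i).factorial : ℂ))) *
      MvPowerSeries.coeff (R := ℂ) (β + α) a

/-- Iterated derivatives along a tuple of directions. -/
def iterD {R : Type*} {N : ℕ} (D : Fin N → R → R) : {k : ℕ} → (Fin k → Fin N) → R → R
  | 0, _, a => a
  | _ + 1, v, a => D (v 0) (iterD D (fun t => v t.succ) a)

/-- The `k`-th term of the Moyal–Weyl product for a constant matrix `π`: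
`((-iℏ/2)^k/k!) Σ π^{i₁j₁}⋯π^{i_kj_k} (∂^k a/∂y^{i₁}⋯) (∂^k b/∂y^{j₁}⋯)`. -/
def moyalTerm {R : Type*} [CommRing R] [Module ℂ R] {N : ℕ}
    (D : Fin N → R → R) (π : Matrix (Fin N) (Fin N) ℂ) (k : ℕ) (a b : R) : R :=
  ((-Complex.I / 2) ^ k / (Nat.factorial k : ℂ)) •
    ∑ i : Fin k → Fin N, ∑ j : Fin k → Fin N,
      (∏ t, π (i t) (j t)) • (iterD D i a * iterD D j b)

/-- Moyal product on formal power series `Σ_m ℏ^m F_m` (coefficients `F : ℕ → R`). -/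
def moyalN {R : Type*} [CommRing R] [Module ℂ R] {N : ℕ} (D : Fin N → R → R)
    (π : Matrix (Fin N) (Fin N) ℂ) (F G : ℕ → R) : ℕ → R :=
  fun m => ∑ k ∈ Finset.range (m + 1), ∑ l ∈ Finset.range (m - k + 1),
    moyalTerm D π k (F l) (G (m - k - l))

/-- Moyal product on formal Laurent series `Σ_m ℏ^m F_m` (coefficients `F : ℤ → R`);
the sum over contributions is finite for series bounded below in `ℏ`-degree. -/
def moyalZ {R : Type*} [CommRing R] [Module ℂ R] {N : ℕ} (D : Fin N → R → R)
    (π : Matrix (Fin N) (Fin N) ℂ) (F G : ℤ → R) : ℤ → R :=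
  fun m => ∑ᶠ p : ℕ × ℤ, moyalTerm D π p.1 (F p.2) (G (m - p.1 - p.2))

/-- Moyal term for an `ℏ`-dependent matrix `π(ℏ) = π₀ + ℏπ₁`: the part of the `k`-th
Moyal term in which the product of matrix entries contributes `ℏ^d`. -/
def moyalTermH {R : Type*} [CommRing R] [Module ℂ R] {N : ℕ} (D : Fin N → R → R)
    (π0 π1 : Matrix (Fin N) (Fin N) ℂ) (k d : ℕ) (a b : R) : R :=
  ((-Complex.I / 2) ^ k / (Nat.factorial k : ℂ)) •
    ∑ i : Fin k → Fin N, ∑ j : Fin k → Fin N,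
      (∑ T ∈ Finset.univ.powerset.filter (fun T : Finset (Fin k) => T.card = d),
          (∏ t ∈ T, π1 (i t) (j t)) * ∏ t ∈ Tᶜ, π0 (i t) (j t)) •
        (iterD D i a * iterD D j b)

/-- Moyal product built from the `ℏ`-dependent matrix `π(ℏ) = π₀ + ℏπ₁`. -/
def moyalNH {R : Type*} [CommRing R] [Module ℂ R] {N : ℕ} (D : Fin N → R → R)
    (π0 π1 : Matrix (Fin N) (Fin N) ℂ) (F G : ℕ → R) : ℕ → R :=
  fun m => ∑ k ∈ Finset.range (m + 1), ∑ d ∈ Finset.range (m - k + 1),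
    ∑ l ∈ Finset.range (m - k - d + 1),
      moyalTermH D π0 π1 k d (F l) (G (m - k - d - l))

/-- The standard Poisson matrix `π` on `ℝ^{2n}` (inverse of the standard symplectic
matrix `ω`, normalized by `Σ_m ω_{jm} π^{mn} = δ_j^n`). -/
def stdPi (n : ℕ) : Matrix (Fin (2 * n)) (Fin (2 * n)) ℂ :=
  Matrix.of fun i j =>
    if (i : ℕ) + n = (j : ℕ) then 1 else if (j : ℕ) + n = (i : ℕ) then -1 else 0

/-- The standard symplectic matrix `ω_{ij}`. -/
def stdOmega (n : ℕ) : Matrix (Fin (2 * n)) (Fin (2 * n)) ℂ := -stdPi n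

/-! ### The formal Weyl algebra `W = ℂ[[y,ℏ]]` -/

/-- The formal Weyl algebra as `ℏ`-coefficient sequences. -/
abbrev Wa (N : ℕ) := ℕ → Wc N

/-- Moyal–Weyl product on `W` for a constant matrix `π`. -/
def wmulPi {N : ℕ} (π : Matrix (Fin N) (Fin N) ℂ) (a b : Wa N) : Wa N := moyalN yD π a b

/-- Moyal–Weyl product on `W` for the standard symplectic Poisson matrix. -/
def wmul {n : ℕ} (a b : Wa (2 * n)) : Wa (2 * n) := wmulPi (stdPi n) a b

/-- The unit `1 ∈ W`. -/
def oneW (N : ℕ) : Wa N := fun m => if m = 0 then 1 else 0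

/-- Scalar multiplication by a formal power series `s ∈ ℂ[[ℏ]]` (given by its
coefficients `s : ℕ → ℂ`). -/
def hsmul {N : ℕ} (s : ℕ → ℂ) (a : Wa N) : Wa N :=
  fun m => ∑ l ∈ Finset.range (m + 1), s l • a (m - l)

/-- The operator `E = -(i/2) Σ_j y^j ∂/∂y^j` on `ℂ[[y]]`. -/
def EulW {N : ℕ} (a : Wc N) : Wc N :=
  Wc.mk fun β => -Complex.I / 2 * (∑ i : Fin N, (β i : ℂ)) * MvPowerSeries.coeff (R := ℂ) β a

/-- `E` on the Weyl algebra, acting on each `ℏ`-coefficient. -/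
def EulWa {N : ℕ} (a : Wa N) : Wa N := fun m => EulW (a m)

/-- Termwise derivative `∂/∂ℏ`. -/
def hD {N : ℕ} (a : Wa N) : Wa N := fun m => (((m + 1 : ℕ) : ℂ)) • a (m + 1)

/-- Multiplication by `ℏ`. -/
def hM {N : ℕ} (a : Wa N) : Wa N := fun m => match m with
  | 0 => 0
  | Nat.succ m' => a m'

/-- Division by `ℏ` (exact on elements divisible by `ℏ`; discards the constant term). -/
def hInv {N : ℕ} (a : Wa N) : Wa N := fun m => a (m + 1)

/-- The `ℏ`-derivative of the Moyal–Weyl product structure: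
`c₁(a,b) = ∂(a⋆b)/∂ℏ − (∂a/∂ℏ)⋆b − a⋆(∂b/∂ℏ)`. -/
def c1W {n : ℕ} (a b : Wa (2 * n)) : Wa (2 * n) :=
  hD (wmul a b) - wmul (hD a) b - wmul a (hD b)

/-! ### W-valued differential forms on ℝ^{2n} -/

/-- Points of `ℝ^{2n}`. -/
abbrev Pt (n : ℕ) := Fin (2 * n) → ℝ

/-- `W`-valued exterior forms on `ℝ^{2n}`: the component at a finite index set
`S = {j₁ < ⋯ < j_q}` is the coefficient of `dx^{j₁} ∧ ⋯ ∧ dx^{j_q}`. -/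
abbrev WF (n : ℕ) := Finset (Fin (2 * n)) → Pt n → Wa (2 * n)

/-- Sign `(-1)^{#{j ∈ S, j < i}}` for inserting `dx^i` in front of `dx^S`. -/
def insSign {N : ℕ} (S : Finset (Fin N)) (i : Fin N) : ℂ :=
  (-1) ^ (S.filter fun j => j < i).card

/-- Koszul sign for merging `dx^{S₁} ∧ dx^{S₂}` into increasing order. -/
def shuffleSign {N : ℕ} (S1 S2 : Finset (Fin N)) : ℂ :=
  (-1) ^ ((S1 ×ˢ S2).filter fun p => p.2 < p.1).card

/-- `∂/∂y^i` on the Weyl algebra. -/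
def yDa {N : ℕ} (i : Fin N) (w : Wa N) : Wa N := fun m => yD i (w m)

/-- The operator `δ a = Σ_i dx^i ∧ ∂a/∂y^i`. -/
def deltaW {n : ℕ} (a : WF n) : WF n :=
  fun S x => ∑ i ∈ S, insSign S i • yDa i (a (S.erase i) x)

/-- The partial derivative `∂/∂x^i` of a `W`-valued function, taken coefficientwise. -/
def xD {n : ℕ} (i : Fin (2 * n)) (f : Pt n → Wa (2 * n)) (x : Pt n) : Wa (2 * n) :=
  fun m => Wc.mk fun β =>
    fderiv ℝ (fun x' => MvPowerSeries.coeff (R := ℂ) β (f x' m)) x (Pi.single i 1)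

/-- The exterior derivative `d a = Σ_i dx^i ∧ ∂a/∂x^i` on `W`-valued forms. -/
def extD {n : ℕ} (a : WF n) : WF n :=
  fun S x => ∑ i ∈ S, insSign S i • xD i (a (S.erase i)) x

/-- The product on `W`-valued forms: Moyal–Weyl product combined with wedge product. -/
def wMulF {n : ℕ} (a b : WF n) : WF n :=
  fun S x => ∑ S1 ∈ S.powerset, shuffleSign S1 (S \ S1) • wmul (a S1 x) (b (S \ S1) x)

/-- Graded commutator `[r, a] = r⋆a − (−1)^{|a|} a⋆r` with a form `r` of degree 1. -/
def comm1 {n : ℕ} (r a : WF n) : WF n :=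
  fun S x => wMulF r a S x - (-1 : ℂ) ^ (S.card - 1) • wMulF a r S x

/-- Graded commutator `[u, a] = u⋆a − a⋆u` with a form `u` of even degree. -/
def commE {n : ℕ} (u a : WF n) : WF n := fun S x => wMulF u a S x - wMulF a u S x

/-- The connection `D = −δ + d + (i/ℏ)[r, ·]` determined by a `W`-valued 1-form `r`. -/
def fedD {n : ℕ} (r a : WF n) : WF n :=
  fun S x => -deltaW a S x + extD a S x + Complex.I • hInv (comm1 r a S x)

/-- A `W`-valued form has smooth coefficients. -/
def WF.Smooth {n : ℕ} (a : WF n) : Prop :=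
  ∀ S m β, ContDiff ℝ (⊤ : ℕ∞) fun x => MvPowerSeries.coeff (R := ℂ) β (a S x m)

/-- A `W`-valued form is homogeneous of form-degree `q`. -/
def isForm {n : ℕ} (q : ℕ) (a : WF n) : Prop := ∀ S, S.card ≠ q → a S = 0

/-- A `W`-valued form is scalar: all coefficients are independent of the `y` variables. -/
def isScalar {n : ℕ} (a : WF n) : Prop :=
  ∀ S x m β, β ≠ 0 → MvPowerSeries.coeff (R := ℂ) β (a S x m) = 0

/-- The constant standard symplectic 2-form `ω = (1/2) Σ ω_{ij} dx^i ∧ dx^j`. -/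
def omegaF (n : ℕ) : WF n :=
  fun S _ m =>
    if m = 0 then
      MvPowerSeries.C (σ := Fin (2 * n)) (R := ℂ)
        (∑ i : Fin (2 * n), ∑ j : Fin (2 * n),
          if i < j ∧ S = {i, j} then stdOmega n i j else 0)
    else 0

/-- The curvature `Ω = ω + δr − dr − (i/ℏ) r⋆r` of the connection `−δ + d + (i/ℏ)[r,·]`. -/
def curv {n : ℕ} (r : WF n) : WF n :=
  fun S x => omegaF n S x + deltaW r S x - extD r S x - Complex.I • hInv (wMulF r r S x)

/-- The operator `δ⁻¹`, acting as `(1/(p+q)) Σ_k y^k ι_k` on the part of `y`-degree `p`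
and form-degree `q` (and as `0` for `p = q = 0`). -/
def deltaInv {n : ℕ} (a : WF n) : WF n :=
  fun S x m => Wc.mk fun β =>
    ((((β.sum fun _ e => e) + S.card : ℕ) : ℂ))⁻¹ *
      ∑ k : Fin (2 * n),
        if k ∉ S ∧ 1 ≤ β k then
          insSign S k * MvPowerSeries.coeff (R := ℂ) (β - Finsupp.single k 1) (a (insert k S) x m)
        else 0

/-! ### x-independent W-valued exterior forms (the graded algebra W⊗Λ) -/

/-- `W`-valued exterior forms with constant coefficients. -/
abbrev WL (n : ℕ) := Finset (Fin (2 * n)) → Wa (2 * n)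

/-- `δ` on `W ⊗ Λ`. -/
def deltaWL {n : ℕ} (a : WL n) : WL n :=
  fun S => ∑ i ∈ S, insSign S i • yDa i (a (S.erase i))

/-- Product (Moyal combined with wedge) on `W ⊗ Λ`. -/
def wMulL {n : ℕ} (a b : WL n) : WL n :=
  fun S => ∑ S1 ∈ S.powerset, shuffleSign S1 (S \ S1) • wmul (a S1) (b (S \ S1))

/-- `E` on `W ⊗ Λ`, acting on the `W`-coefficients. -/
def EulL {n : ℕ} (a : WL n) : WL n := fun S => EulWa (a S)

/-- The `W`-valued 1-form `Σ_{i,j} ω_{ij} y^i dx^j`. -/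
def oydxW (n : ℕ) : WL n :=
  fun S m =>
    if m = 0 then
      ∑ j : Fin (2 * n),
        (if S = {j} then ∑ i : Fin (2 * n), stdOmega n i j • MvPowerSeries.X i else 0)
    else 0

/-- The 1-form `K₀ = −(Er − iℏ ∂r/∂ℏ + i r + (i/2) Σ ω_{ij} y^i dx^j)`. -/
def K0 {n : ℕ} (r : WF n) : WF n :=
  fun S x =>
    -(EulWa (r S x) - Complex.I • hM (hD (r S x)) + Complex.I • r S x
      + (Complex.I / 2) • oydxW n S)

/-- The quantum Liouville-type operator `ρ(u) = (ℏ/i) ∂u/∂ℏ + E u`. -/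
def rhoW {n : ℕ} (u : WF n) : WF n :=
  fun S x m => (-Complex.I * (m : ℂ)) • u S x m + EulW (u S x m)

/-- `c₁` extended to `W`-valued forms. -/
def c1F {n : ℕ} (a b : WF n) : WF n :=
  fun S x => ∑ S1 ∈ S.powerset, shuffleSign S1 (S \ S1) • c1W (a S1 x) (b (S \ S1) x)

/-! ### The Laurent (ℏ-inverted) Weyl algebra and forms -/

/-- The extended Weyl algebra `W⁺ = ℂ[[y]][ℏ⁻¹,ℏ]]` as `ℏ`-coefficient sequences. -/
abbrev WaZ (N : ℕ) := ℤ → Wc N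

/-- Moyal–Weyl product on `W⁺` for a constant matrix `π`. -/
def wmulZPi {N : ℕ} (π : Matrix (Fin N) (Fin N) ℂ) (a b : WaZ N) : WaZ N := moyalZ yD π a b

/-- Moyal–Weyl product on `W⁺` for the standard symplectic Poisson matrix. -/
def wmulZ {n : ℕ} (a b : WaZ (2 * n)) : WaZ (2 * n) := wmulZPi (stdPi n) a b

/-- `W⁺`-valued exterior forms on `ℝ^{2n}`. -/
abbrev WFZ (n : ℕ) := Finset (Fin (2 * n)) → Pt n → WaZ (2 * n)

/-- `∂/∂y^i` on `W⁺`. -/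
def yDaZ {N : ℕ} (i : Fin N) (w : WaZ N) : WaZ N := fun m => yD i (w m)

/-- `δ` on `W⁺`-valued forms. -/
def deltaZ {n : ℕ} (a : WFZ n) : WFZ n :=
  fun S x => ∑ i ∈ S, insSign S i • yDaZ i (a (S.erase i) x)

/-- `∂/∂x^i` on `W⁺`-valued functions. -/
def xDZ {n : ℕ} (i : Fin (2 * n)) (f : Pt n → WaZ (2 * n)) (x : Pt n) : WaZ (2 * n) :=
  fun m => Wc.mk fun β =>
    fderiv ℝ (fun x' => MvPowerSeries.coeff (R := ℂ) β (f x' m)) x (Pi.single i 1)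

/-- Exterior derivative on `W⁺`-valued forms. -/
def extDZ {n : ℕ} (a : WFZ n) : WFZ n :=
  fun S x => ∑ i ∈ S, insSign S i • xDZ i (a (S.erase i)) x

/-- Product on `W⁺`-valued forms. -/
def wMulZF {n : ℕ} (a b : WFZ n) : WFZ n :=
  fun S x => ∑ S1 ∈ S.powerset, shuffleSign S1 (S \ S1) • wmulZ (a S1 x) (b (S \ S1) x)

/-- Graded commutator with a 1-form, on `W⁺`-valued forms. -/
def comm1Z {n : ℕ} (r a : WFZ n) : WFZ n :=
  fun S x => wMulZF r a S x - (-1 : ℂ) ^ (S.card - 1) • wMulZF a r S x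

/-- Division by `ℏ` on `W⁺` (exact: a shift of Laurent coefficients). -/
def shiftZ {N : ℕ} (a : WaZ N) : WaZ N := fun m => a (m + 1)

/-- The connection `D = −δ + d + (i/ℏ)[r,·]` on `W⁺`-valued forms. -/
def fedDZ {n : ℕ} (r a : WFZ n) : WFZ n :=
  fun S x => -deltaZ a S x + extDZ a S x + Complex.I • shiftZ (comm1Z r a S x)

/-- Termwise `∂/∂ℏ` on `W⁺`. -/
def hDZ {N : ℕ} (a : WaZ N) : WaZ N := fun m => ((m + 1 : ℤ) : ℂ) • a (m + 1)

/-- `∂/∂ℏ` on `W⁺`-valued forms. -/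
def hDZF {n : ℕ} (a : WFZ n) : WFZ n := fun S x => hDZ (a S x)

/-- `E` on `W⁺`. -/
def EulZ {N : ℕ} (a : WaZ N) : WaZ N := fun m => EulW (a m)

/-- `E` on `W⁺`-valued forms. -/
def EulZF {n : ℕ} (a : WFZ n) : WFZ n := fun S x => EulZ (a S x)

/-- `c₁` on `W⁺`. -/
def c1Za {n : ℕ} (a b : WaZ (2 * n)) : WaZ (2 * n) :=
  hDZ (wmulZ a b) - wmulZ (hDZ a) b - wmulZ a (hDZ b)

/-- `c₁` on `W⁺`-valued forms. -/
def c1ZF {n : ℕ} (a b : WFZ n) : WFZ n :=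
  fun S x => ∑ S1 ∈ S.powerset, shuffleSign S1 (S \ S1) • c1Za (a S1 x) (b (S \ S1) x)

/-- Smoothness of the coefficients of a `W⁺`-valued form. -/
def WFZ.Smooth {n : ℕ} (a : WFZ n) : Prop :=
  ∀ S m β, ContDiff ℝ (⊤ : ℕ∞) fun x => MvPowerSeries.coeff (R := ℂ) β (a S x m)

/-- Homogeneity of form-degree `q` for `W⁺`-valued forms. -/
def isFormZ {n : ℕ} (q : ℕ) (a : WFZ n) : Prop := ∀ S, S.card ≠ q → a S = 0

/-- A `W⁺`-valued form has power series coefficients (no negative powers of `ℏ`). -/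
def PSupp {n : ℕ} (a : WFZ n) : Prop := ∀ S x m, m < 0 → a S x m = 0

/-- A Laurent series is bounded below in `ℏ`-degree. -/
def BddZ {α : Type*} [Zero α] (f : ℤ → α) : Prop :=
  ∃ N : ℕ, ∀ m : ℤ, m < -(N : ℤ) → f m = 0

/-! ### Smooth functions and star-products on ℝ^N -/

/-- Complex-valued functions on `ℝ^N`. -/
abbrev SmFn (N : ℕ) := (Fin N → ℝ) → ℂ

/-- Partial derivative `∂/∂x^i` of a (smooth) function. -/
def xDf {N : ℕ} (i : Fin N) (f : SmFn N) : SmFn N := fun x => fderiv ℝ f x (Pi.single i 1)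

/-- Iterated partial derivative `∂^α`. -/
def xDfM {N : ℕ} (α : Fin N →₀ ℕ) (f : SmFn N) : SmFn N :=
  (List.finRange N).foldr (fun i g => (xDf i)^[α i] g) f

/-- Formal power series with function coefficients: `C^∞(ℝ^N,ℂ)[[ℏ]]`. -/
abbrev SmSer (N : ℕ) := ℕ → SmFn N

/-- Formal Laurent series with function coefficients: `C^∞(ℝ^N,ℂ)[ℏ⁻¹,ℏ]]`. -/
abbrev SmLau (N : ℕ) := ℤ → SmFn N

/-- All coefficients of a series are smooth. -/
def SmSer.Smooth {N : ℕ} (F : SmSer N) : Prop := ∀ m, ContDiff ℝ (⊤ : ℕ∞) (F m)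

/-- All coefficients of a Laurent series are smooth. -/
def SmLau.Smooth {N : ℕ} (F : SmLau N) : Prop := ∀ m, ContDiff ℝ (⊤ : ℕ∞) (F m)

/-- The Moyal star-product on `C^∞(ℝ^N,ℂ)[[ℏ]]` for a constant matrix `π`. -/
def fMul {N : ℕ} (π : Matrix (Fin N) (Fin N) ℂ) (F G : SmSer N) : SmSer N :=
  moyalN xDf π F G

/-- The Moyal star-product on Laurent series. -/
def fMulZ {N : ℕ} (π : Matrix (Fin N) (Fin N) ℂ) (F G : SmLau N) : SmLau N :=
  moyalZ xDf π F G

/-- The Moyal star-product with `ℏ`-dependent matrix `π(ℏ) = π₀ + ℏπ₁`. -/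
def fMulH {N : ℕ} (π0 π1 : Matrix (Fin N) (Fin N) ℂ) (F G : SmSer N) : SmSer N :=
  moyalNH xDf π0 π1 F G

/-- The constant series `1`. -/
def oneSer (N : ℕ) : SmSer N := fun m => if m = 0 then (fun _ => 1) else 0

/-- The standard Poisson bracket `{f,g} = Σ π^{ij} ∂_i f ∂_j g` on `ℝ^{2n}`. -/
def pb (n : ℕ) (f g : SmFn (2 * n)) : SmFn (2 * n) :=
  fun x => ∑ i, ∑ j, stdPi n i j * xDf i f x * xDf j g x

/-! ### Multidifferential operators and star-products -/

/-- A `k`-multidifferential operator on `C^∞(ℝ^N,ℂ)`: a finite sum of terms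
`u(x) (∂^{α₁}f₁)⋯(∂^{α_k}f_k)`, recorded by its finitely many coefficients. -/
abbrev MDOp (N k : ℕ) := (Fin k → (Fin N →₀ ℕ)) →₀ SmFn N

/-- Action of a multidifferential operator. -/
def MDOp.app {N k : ℕ} (c : MDOp N k) (f : Fin k → SmFn N) : SmFn N :=
  fun x => c.sum fun T u => u x * ∏ t, xDfM (T t) (f t) x

/-- A multidifferential operator has smooth coefficients. -/
def MDOp.Smooth {N k : ℕ} (c : MDOp N k) : Prop := ∀ T, ContDiff ℝ (⊤ : ℕ∞) (c T)

/-- A family of bidifferential operators `C_k`, extended `ℂ[[ℏ]]`-bilinearly: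
`F ⋆ G = Σ ℏ^{k+l+l'} C_k(F_l, G_{l'})`. -/
def starN {N : ℕ} (C : ℕ → MDOp N 2) (F G : SmSer N) : SmSer N :=
  fun m => ∑ k ∈ Finset.range (m + 1), ∑ l ∈ Finset.range (m - k + 1),
    MDOp.app (C k) ![F l, G (m - k - l)]

/-- The `ℂ[ℏ⁻¹,ℏ]]`-bilinear extension of a star-product to Laurent series. -/
def starZ {N : ℕ} (C : ℕ → MDOp N 2) (F G : SmLau N) : SmLau N :=
  fun m => ∑ᶠ p : ℕ × ℤ, MDOp.app (C p.1) ![F p.2, G (m - p.1 - p.2)]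

/-- Action of a Laurent cochain `c = Σ_l ℏ^l c_l` of multidifferential operators
on a `k`-tuple of Laurent series. -/
def lac {N k : ℕ} (cc : ℤ → MDOp N k) (u : Fin k → SmLau N) : SmLau N :=
  fun m => ∑ᶠ v : Fin k → ℤ, MDOp.app (cc (m - ∑ t, v t)) fun t => u t (v t)

/-- A differential star-product on `ℝ^{2n}` quantizing the standard symplectic
structure: `f ⋆ g = Σ ℏ^k C_k(f,g)` with `C_k` bidifferential, `C₀(f,g) = fg`,
`1` a unit, `⋆` associative, and `C₁(f,g) − C₁(g,f) = −i{f,g}`. -/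
structure DiffStar (n : ℕ) where
  C : ℕ → MDOp (2 * n) 2
  smooth : ∀ k, MDOp.Smooth (C k)
  C0 : ∀ f g : SmFn (2 * n), MDOp.app (C 0) ![f, g] = f * g
  unit_left : ∀ F : SmSer (2 * n), SmSer.Smooth F → starN C (oneSer (2 * n)) F = F
  unit_right : ∀ F : SmSer (2 * n), SmSer.Smooth F → starN C F (oneSer (2 * n)) = F
  assoc : ∀ F G H : SmSer (2 * n), SmSer.Smooth F → SmSer.Smooth G → SmSer.Smooth H →
    starN C (starN C F G) H = starN C F (starN C G H)
  C1skew : ∀ f g : SmFn (2 * n), ContDiff ℝ (⊤ : ℕ∞) f → ContDiff ℝ (⊤ : ℕ∞) g →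
    MDOp.app (C 1) ![f, g] - MDOp.app (C 1) ![g, f] = fun x => -Complex.I * pb n f g x

/-! ### Hochschild coboundary -/

/-- The Hochschild coboundary `b̃` of a `k`-cochain with respect to a product `mul`. -/
def hoch {A : Type*} [AddCommGroup A] (mul : A → A → A) {k : ℕ}
    (c : (Fin k → A) → A) : (Fin (k + 1) → A) → A :=
  fun u =>
    mul (u 0) (c fun t => u t.succ)
      + ∑ i : Fin k, ((-1 : ℤ) ^ ((i : ℕ) + 1)) •
          c (fun j => if (j : ℕ) < (i : ℕ) then u j.castSucc
            else if (j : ℕ) = (i : ℕ) then mul (u j.castSucc) (u j.succ)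
            else u j.succ)
      + ((-1 : ℤ) ^ (k + 1)) • mul (c fun t => u t.castSucc) (u (Fin.last k))

/-! ### Formal differential operators on ℂ[[y]] -/

/-- A formal `k`-differential operator on `ℂ[[y^1,…,y^N]]`:
`c(a₁,…,a_k) = Σ_T u^T (∂^{T 1}a₁)⋯(∂^{T k}a_k)` with coefficients
`u^T ∈ ℂ[[y]]` such that for each degree `d` only finitely many tuples `T` have a
coefficient containing a nonzero monomial of degree `≤ d`. -/
structure FDOp (N k : ℕ) where
  u : (Fin k → (Fin N →₀ ℕ)) → Wc N
  fin : ∀ d : ℕ,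
    {T : Fin k → (Fin N →₀ ℕ) | ∃ β : Fin N →₀ ℕ,
      (β.sum fun _ e => e) ≤ d ∧ MvPowerSeries.coeff (R := ℂ) β (u T) ≠ 0}.Finite

/-- Action of a formal differential operator (the defining sum converges in the
`y`-adic topology; each coefficient receives only finitely many contributions). -/
def FDOp.app {N k : ℕ} (P : FDOp N k) (a : Fin k → Wc N) : Wc N :=
  Wc.mk fun β => ∑ᶠ T : Fin k → (Fin N →₀ ℕ),
    MvPowerSeries.coeff (R := ℂ) β (P.u T * ∏ t, yDM (T t) (a t))

/-- Action of a Laurent cochain `c = Σ_l ℏ^l c_l` of formal differential operators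
on a `k`-tuple of elements of `W⁺`. -/
def flac {N k : ℕ} (cc : ℤ → FDOp N k) (a : Fin k → WaZ N) : WaZ N :=
  fun m => ∑ᶠ v : Fin k → ℤ, FDOp.app (cc (m - ∑ t, v t)) fun t => a t (v t)

/-! ### Flat sections, Taylor series and quantum exponential -/

/-- Fiberwise Taylor series of a smooth function at `x`. -/
def taylorW {N : ℕ} (f : SmFn N) (x : Fin N → ℝ) : Wc N :=
  Wc.mk fun β => (∏ i : Fin N, ((β i).factorial : ℂ))⁻¹ * xDfM β f x

/-- Sections of the Weyl bundle over `ℝ^{2n}` (W-valued 0-forms). -/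
abbrev Sect (n : ℕ) := Pt n → Wa (2 * n)

/-- The fiberwise Taylor lift of a series of smooth functions. -/
def taylorS {n : ℕ} (F : SmSer (2 * n)) : Sect n := fun x m => taylorW (F m) x

/-- A section has smooth coefficients. -/
def Sect.Smooth {n : ℕ} (u : Sect n) : Prop :=
  ∀ m β, ContDiff ℝ (⊤ : ℕ∞) fun x => MvPowerSeries.coeff (R := ℂ) β (u x m)

/-- A section is flat for `D = −δ + d`: its component equations read
`∂u/∂x^i = ∂u/∂y^i` for all `i`. -/
def Sect.Flat {n : ℕ} (u : Sect n) : Prop :=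
  ∀ (i : Fin (2 * n)) (x : Pt n), xD i u x = yDa i (u x)

/-- The symbol map `σ(u) = u|_{y=0}`. -/
def sigma {n : ℕ} (u : Sect n) : SmSer (2 * n) :=
  fun m x => MvPowerSeries.coeff (R := ℂ) 0 (u x m)

/-- Fiberwise Moyal–Weyl product of sections. -/
def wmulS {n : ℕ} (u v : Sect n) : Sect n := fun x => wmul (u x) (v x)

/-! ### Vector fields and Liouville-type operators -/

/-- Action of a vector field `X = Σ_j X^j ∂_j` on a function. -/
def XAct {N : ℕ} (X : Fin N → SmFn N) (f : SmFn N) : SmFn N :=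
  fun x => ∑ j, X j x * xDf j f x

/-- A smooth function viewed as a series concentrated in `ℏ`-degree `0`. -/
def embS {N : ℕ} (f : SmFn N) : SmSer N := fun m => if m = 0 then f else 0

/-- The Hochschild coboundary `b̃X(f,g) = f⋆(Xg) − X(f⋆g) + (Xf)⋆g` of a vector
field, for the Moyal star-product with constant matrix `π`. -/
def bXMoyal {N : ℕ} (π : Matrix (Fin N) (Fin N) ℂ) (X : Fin N → SmFn N)
    (f g : SmFn N) : SmSer N :=
  fMul π (embS f) (embS (XAct X g)) - (fun m => XAct X (fMul π (embS f) (embS g) m))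
    + fMul π (embS (XAct X f)) (embS g)

/-- The operator `ℏ ∂_ℏ + X` on `C^∞(ℝ^N,ℂ)[[ℏ]]`. -/
def LOp {N : ℕ} (X : Fin N → SmFn N) (F : SmSer N) : SmSer N :=
  fun m x => (m : ℂ) * F m x + XAct X (F m) x

/-- The derivative of a star-product with respect to `ℏ`:
`c(f,g) = Σ_{k≥1} k ℏ^{k-1} C_k(f,g)`, extended `ℂ[[ℏ]]`-bilinearly. -/
def dStar {N : ℕ} (C : ℕ → MDOp N 2) (F G : SmSer N) : SmSer N :=
  fun m => ∑ k ∈ Finset.Icc 1 (m + 1), (k : ℂ) •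
    ∑ l ∈ Finset.range (m + 1 - k + 1), MDOp.app (C k) ![F l, G (m + 1 - k - l)]

end StarPaper

/-! `ρ = (ℏ/i)∂/∂ℏ + E` is a derivation of the Moyal–Weyl product: the `k`-th Moyal term lowers
the `y`-degree by `2k` and raises the `ℏ`-degree by `k`, which changes the eigenvalue of `E` by
`ik` and that of `(ℏ/i)∂/∂ℏ` by `−ik`. Moreover `ρ` commutes with `∂/∂x`, and with `∂/∂y^j` and
`1/ℏ` up to the terms `(i/2)∂/∂y^j` and `i/ℏ`. Applying `ρ` to `Dũ = 0` therefore gives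
`D(ρũ) = (i/ℏ)[−ρr − ir, ũ] + (i/2)δũ`, and `(i/2)δũ = (i/ℏ)[−(i/2)Σ ω_{ij} y^i dx^j, ũ]`
because `[Σ_i ω_{ij} y^i, a] = iℏ ∂a/∂y^j`. Both sides are `1`-forms, so it suffices to compare
their `dx^j`-components. -/

namespace StarPaper

open MvPowerSeries
open Complex (I)
open scoped Matrix

noncomputable section

section PowerSeries

variable {N : ℕ}

lemma coeff_yD (i : Fin N) (a : Wc N) (β : Fin N →₀ ℕ) :
    coeff β (yD i a) = ((β i : ℂ) + 1) * coeff (β + Finsupp.single i 1) a := rfl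

def eulerEigenvalue (β : Fin N →₀ ℕ) : ℂ := -I / 2 * ∑ i, (β i : ℂ)

lemma eulerEigenvalue_add (β γ : Fin N →₀ ℕ) :
    eulerEigenvalue (β + γ) = eulerEigenvalue β + eulerEigenvalue γ := by
  simp only [eulerEigenvalue, Finsupp.add_apply, Nat.cast_add, Finset.sum_add_distrib]
  ring

lemma eulerEigenvalue_single (i : Fin N) : eulerEigenvalue (Finsupp.single i 1) = -I / 2 := by
  simp [eulerEigenvalue, Finsupp.single_apply]

lemma coeff_EulW (a : Wc N) (β : Fin N →₀ ℕ) :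
    coeff β (EulW a) = eulerEigenvalue β * coeff β a := rfl

lemma isLinearMap_yD (i : Fin N) : IsLinearMap ℂ (yD (N := N) i) where
  map_add a b := by ext β; simp only [coeff_yD, map_add]; ring
  map_smul c a := by ext β; simp only [coeff_yD, coeff_smul]; ring

lemma isLinearMap_EulW : IsLinearMap ℂ (EulW (N := N)) where
  map_add a b := by ext β; simp only [coeff_EulW, map_add]; ring
  map_smul c a := by ext β; simp only [coeff_EulW, coeff_smul]; ring

lemma isLinearMap_iterD {k : ℕ} (v : Fin k → Fin N) : IsLinearMap ℂ (iterD yD v) := by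
  induction k with
  | zero => exact ⟨fun _ _ => rfl, fun _ _ => rfl⟩
  | succ k ih =>
    exact ⟨fun a b => by simp only [iterD, (ih _).map_add, (isLinearMap_yD _).map_add],
      fun c a => by simp only [iterD, (ih _).map_smul, (isLinearMap_yD _).map_smul]⟩

lemma EulW_yD (i : Fin N) (a : Wc N) :
    EulW (yD i a) = yD i (EulW a) + (I / 2) • yD i a := by
  ext β
  simp only [coeff_EulW, coeff_yD, map_add, coeff_smul, eulerEigenvalue_add,
    eulerEigenvalue_single]
  ring

lemma EulW_iterD {k : ℕ} (v : Fin k → Fin N) (a : Wc N) :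
    EulW (iterD yD v a) = iterD yD v (EulW a) + ((k : ℂ) * (I / 2)) • iterD yD v a := by
  induction k generalizing a with
  | zero => simp [iterD]
  | succ k ih =>
    simp only [iterD, EulW_yD, ih, (isLinearMap_yD _).map_add, (isLinearMap_yD _).map_smul]
    push_cast
    module

lemma EulW_mul (a b : Wc N) : EulW (a * b) = EulW a * b + a * EulW b := by
  ext β
  simp only [coeff_EulW, map_add, coeff_mul, Finset.mul_sum, ← Finset.sum_add_distrib]
  refine Finset.sum_congr rfl fun p hp => ?_
  rw [← Finset.HasAntidiagonal.mem_antidiagonal.mp hp, eulerEigenvalue_add]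
  ring

lemma EulW_sum {ι : Type*} (s : Finset ι) (f : ι → Wc N) :
    EulW (∑ i ∈ s, f i) = ∑ i ∈ s, EulW (f i) :=
  map_sum (IsLinearMap.mk' _ isLinearMap_EulW) f s

lemma add_single_eq_single_iff {β : Fin N →₀ ℕ} {p i : Fin N} :
    β + Finsupp.single p 1 = Finsupp.single i 1 ↔ β = 0 ∧ i = p := by
  refine ⟨fun h => ?_, by rintro ⟨rfl, rfl⟩; rw [zero_add]⟩
  obtain rfl : i = p := by
    by_contra hip
    simpa [Finsupp.single_apply, hip] using DFunLike.congr_fun h p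
  exact ⟨add_eq_right.mp h, rfl⟩

lemma yD_X (p i : Fin N) : yD p (X i) = if i = p then 1 else 0 := by
  ext β
  rw [coeff_yD, coeff_X, apply_ite (coeff β), coeff_one, map_zero]
  simp only [add_single_eq_single_iff]
  by_cases hβ : β = 0 <;> by_cases hi : i = p <;> simp [hβ, hi]

lemma yD_C (p : Fin N) (c : ℂ) : yD p (C c) = 0 := by
  ext β
  rw [coeff_yD, coeff_C, if_neg, mul_zero, map_zero]
  intro h
  simpa using DFunLike.congr_fun h p

end PowerSeries

section Moyal

variable {N : ℕ} (π : Matrix (Fin N) (Fin N) ℂ)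

lemma moyalTerm_zero {R : Type*} [CommRing R] [Module ℂ R] (D : Fin N → R → R) (a b : R) :
    moyalTerm D π 0 a b = a * b := by
  simp [moyalTerm, iterD]

lemma moyalTerm_one {R : Type*} [CommRing R] [Module ℂ R] (D : Fin N → R → R) (a b : R) :
    moyalTerm D π 1 a b = (-I / 2) • ∑ p, ∑ q, π p q • (D p a * D q b) := by
  simp only [moyalTerm, pow_one, Nat.factorial_one, Nat.cast_one, div_one]
  rw [← (Equiv.funUnique (Fin 1) (Fin N)).symm.sum_comp]
  congr 1
  refine Finset.sum_congr rfl fun p _ => ?_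
  rw [← (Equiv.funUnique (Fin 1) (Fin N)).symm.sum_comp]
  simp [iterD]

lemma moyalTerm_add_left (k : ℕ) (a a' b : Wc N) :
    moyalTerm yD π k (a + a') b = moyalTerm yD π k a b + moyalTerm yD π k a' b := by
  simp only [moyalTerm, (isLinearMap_iterD _).map_add, add_mul, smul_add, Finset.sum_add_distrib]

lemma moyalTerm_add_right (k : ℕ) (a b b' : Wc N) :
    moyalTerm yD π k a (b + b') = moyalTerm yD π k a b + moyalTerm yD π k a b' := by
  simp only [moyalTerm, (isLinearMap_iterD _).map_add, mul_add, smul_add, Finset.sum_add_distrib]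

lemma moyalTerm_smul_left (k : ℕ) (c : ℂ) (a b : Wc N) :
    moyalTerm yD π k (c • a) b = c • moyalTerm yD π k a b := by
  simp only [moyalTerm, (isLinearMap_iterD _).map_smul, smul_mul_assoc, Finset.smul_sum]
  simp only [smul_comm c]

lemma moyalTerm_smul_right (k : ℕ) (c : ℂ) (a b : Wc N) :
    moyalTerm yD π k a (c • b) = c • moyalTerm yD π k a b := by
  simp only [moyalTerm, (isLinearMap_iterD _).map_smul, mul_smul_comm, Finset.smul_sum]
  simp only [smul_comm c]

lemma moyalTerm_zero_left (k : ℕ) (b : Wc N) : moyalTerm yD π k 0 b = 0 := by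
  simpa using moyalTerm_smul_left π k 0 0 b

lemma moyalTerm_zero_right (k : ℕ) (a : Wc N) : moyalTerm yD π k a 0 = 0 := by
  simpa using moyalTerm_smul_right π k 0 a 0

lemma EulW_moyalTerm (k : ℕ) (a b : Wc N) :
    EulW (moyalTerm yD π k a b) = moyalTerm yD π k (EulW a) b + moyalTerm yD π k a (EulW b)
      + (I * k) • moyalTerm yD π k a b := by
  simp only [moyalTerm, isLinearMap_EulW.map_smul, EulW_sum, smul_comm (I * k), ← smul_add,
    Finset.smul_sum, ← Finset.sum_add_distrib]
  refine Finset.sum_congr rfl fun i _ => Finset.sum_congr rfl fun j _ => ?_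
  rw [EulW_mul, EulW_iterD, EulW_iterD, add_mul, mul_add, smul_mul_assoc, mul_smul_comm]
  module

lemma wmulPi_add_left (a a' b : Wa N) :
    wmulPi π (a + a') b = wmulPi π a b + wmulPi π a' b := by
  funext m
  simp only [wmulPi, moyalN, Pi.add_apply, moyalTerm_add_left, Finset.sum_add_distrib]

lemma wmulPi_add_right (a b b' : Wa N) :
    wmulPi π a (b + b') = wmulPi π a b + wmulPi π a b' := by
  funext m
  simp only [wmulPi, moyalN, Pi.add_apply, moyalTerm_add_right, Finset.sum_add_distrib]

lemma wmulPi_smul_left (c : ℂ) (a b : Wa N) : wmulPi π (c • a) b = c • wmulPi π a b := by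
  funext m
  simp only [wmulPi, moyalN, Pi.smul_apply, moyalTerm_smul_left, Finset.smul_sum]

lemma wmulPi_smul_right (c : ℂ) (a b : Wa N) : wmulPi π a (c • b) = c • wmulPi π a b := by
  funext m
  simp only [wmulPi, moyalN, Pi.smul_apply, moyalTerm_smul_right, Finset.smul_sum]

lemma wmulPi_zero_left (b : Wa N) : wmulPi π 0 b = 0 := by
  simpa using wmulPi_smul_left π 0 0 b

lemma wmulPi_zero_right (a : Wa N) : wmulPi π a 0 = 0 := by
  simpa using wmulPi_smul_right π 0 a 0

end Moyal

section Rho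

variable {N : ℕ}

def rhoWa (a : Wa N) : Wa N := fun m => (-I * m) • a m + EulW (a m)

lemma rhoW_apply {n : ℕ} (u : WF n) (S : Finset (Fin (2 * n))) (x : Pt n) :
    rhoW u S x = rhoWa (u S x) := rfl

lemma isLinearMap_rhoWa : IsLinearMap ℂ (rhoWa (N := N)) where
  map_add a b := by
    funext m
    simp only [rhoWa, Pi.add_apply, isLinearMap_EulW.map_add]
    module
  map_smul c a := by
    funext m
    simp only [rhoWa, Pi.smul_apply, isLinearMap_EulW.map_smul]
    module

lemma isLinearMap_hInv : IsLinearMap ℂ (hInv (N := N)) := ⟨fun _ _ => rfl, fun _ _ => rfl⟩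

lemma hInv_hM (a : Wa N) : hInv (hM a) = a := rfl

lemma rhoWa_eq_hM_hD_add_EulWa (a : Wa N) : rhoWa a = -I • hM (hD a) + EulWa a := by
  funext m
  cases m with
  | zero => simp [rhoWa, hM, EulWa]
  | succ m => simp only [rhoWa, hM, hD, EulWa, Pi.add_apply, Pi.smul_apply, smul_smul]

lemma rhoWa_yDa (j : Fin N) (a : Wa N) :
    rhoWa (yDa j a) = yDa j (rhoWa a) + (I / 2) • yDa j a := by
  funext m
  simp only [rhoWa, yDa, Pi.add_apply, Pi.smul_apply, EulW_yD, (isLinearMap_yD j).map_add,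
    (isLinearMap_yD j).map_smul]
  module

lemma rhoWa_hInv (a : Wa N) : rhoWa (hInv a) = hInv (rhoWa a) + I • hInv a := by
  funext m
  simp only [rhoWa, hInv, Pi.add_apply, Pi.smul_apply]
  push_cast
  module

lemma rhoWa_wmulPi (π : Matrix (Fin N) (Fin N) ℂ) (a b : Wa N) :
    rhoWa (wmulPi π a b) = wmulPi π (rhoWa a) b + wmulPi π a (rhoWa b) := by
  funext m
  simp only [rhoWa, wmulPi, moyalN, Pi.add_apply, EulW_sum, Finset.smul_sum,
    moyalTerm_add_left, moyalTerm_smul_left, moyalTerm_add_right, moyalTerm_smul_right,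
    EulW_moyalTerm, ← Finset.sum_add_distrib]
  refine Finset.sum_congr rfl fun k hk => Finset.sum_congr rfl fun l hl => ?_
  have hk := Finset.mem_range.mp hk
  have hl := Finset.mem_range.mp hl
  rw [Nat.cast_sub (by omega), Nat.cast_sub (by omega)]
  module

end Rho

section Symplectic

variable {n : ℕ}

lemma stdPi_transpose : (stdPi n)ᵀ = -stdPi n := by
  ext i j
  have := i.isLt
  simp only [stdPi, Matrix.transpose_apply, Matrix.of_apply, Matrix.neg_apply]
  split_ifs <;> first | omega | norm_num

lemma stdPi_mul_self : stdPi n * stdPi n = -1 := by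
  ext p j
  have hp := p.isLt
  have hj := j.isLt
  let q : Fin (2 * n) := ⟨if (p : ℕ) < n then p + n else p - n, by split_ifs <;> omega⟩
  rw [Matrix.mul_apply, Finset.sum_eq_single q]
  · simp only [q, stdPi, Matrix.of_apply, Matrix.neg_apply, Matrix.one_apply, Fin.ext_iff]
    split_ifs <;> first | omega | norm_num
  · intro q' _ hq'
    simp only [q, stdPi, Matrix.of_apply, ne_eq, Fin.ext_iff] at hq' ⊢
    split_ifs at hq' ⊢ <;> first | omega | norm_num
  · simp

lemma stdOmega_mul_stdPi : stdOmega n * stdPi n = 1 := by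
  rw [stdOmega, Matrix.neg_mul, stdPi_mul_self, neg_neg]

lemma stdPi_mul_stdOmega : stdPi n * stdOmega n = 1 :=
  mul_eq_one_comm.mp stdOmega_mul_stdPi

lemma sum_stdPi_mul_stdOmega (p j : Fin (2 * n)) :
    ∑ q, stdPi n p q * stdOmega n q j = if p = j then 1 else 0 := by
  simpa [Matrix.mul_apply, Matrix.one_apply] using
    congrFun (congrFun (stdPi_mul_stdOmega (n := n)) p) j

lemma sum_stdPi_transpose_mul_stdOmega (q j : Fin (2 * n)) :
    ∑ p, stdPi n p q * stdOmega n p j = -if q = j then 1 else 0 := by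
  have h : (stdPi n)ᵀ * stdOmega n = -1 := by
    rw [stdPi_transpose, Matrix.neg_mul, stdPi_mul_stdOmega]
  simpa [Matrix.mul_apply, Matrix.one_apply] using congrFun (congrFun h q) j

end Symplectic

section OmegaY

variable {n : ℕ}

def omegaY (j : Fin (2 * n)) : Wc (2 * n) := ∑ i, stdOmega n i j • X i

lemma yD_omegaY (p j : Fin (2 * n)) : yD p (omegaY j) = C (stdOmega n p j) := by
  have hsum := map_sum (IsLinearMap.mk' _ (isLinearMap_yD p))
    (fun i => stdOmega n i j • X i) Finset.univ
  simp only [IsLinearMap.mk'_apply, (isLinearMap_yD p).map_smul, yD_X, smul_ite,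
    smul_zero, Finset.sum_ite_eq', Finset.mem_univ, if_true] at hsum
  rw [omegaY, hsum, smul_eq_C_mul, mul_one]

lemma iterD_omegaY_eq_C {k : ℕ} (v : Fin (k + 1) → Fin (2 * n)) (j : Fin (2 * n)) :
    ∃ c : ℂ, iterD yD v (omegaY j) = C c := by
  induction k with
  | zero => exact ⟨stdOmega n (v 0) j, yD_omegaY _ _⟩
  | succ k ih =>
    obtain ⟨c, hc⟩ := ih fun t => v t.succ
    exact ⟨0, by rw [iterD, hc, yD_C, map_zero]⟩

lemma iterD_omegaY_eq_zero {k : ℕ} (v : Fin (k + 2) → Fin (2 * n)) (j : Fin (2 * n)) :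
    iterD yD v (omegaY j) = 0 := by
  obtain ⟨c, hc⟩ := iterD_omegaY_eq_C (fun t => v t.succ) j
  rw [iterD, hc, yD_C]

lemma moyalTerm_omegaY_left_of_two_le {k : ℕ} (hk : 2 ≤ k)
    (π : Matrix (Fin (2 * n)) (Fin (2 * n)) ℂ) (j : Fin (2 * n)) (c : Wc (2 * n)) :
    moyalTerm yD π k (omegaY j) c = 0 := by
  obtain ⟨k, rfl⟩ : ∃ k', k = k' + 2 := ⟨k - 2, by omega⟩
  refine (congrArg _ (Finset.sum_eq_zero fun v _ => Finset.sum_eq_zero fun w _ => ?_)).trans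
    (smul_zero _)
  rw [iterD_omegaY_eq_zero, zero_mul, smul_zero]

lemma moyalTerm_omegaY_right_of_two_le {k : ℕ} (hk : 2 ≤ k)
    (π : Matrix (Fin (2 * n)) (Fin (2 * n)) ℂ) (j : Fin (2 * n)) (c : Wc (2 * n)) :
    moyalTerm yD π k c (omegaY j) = 0 := by
  obtain ⟨k, rfl⟩ : ∃ k', k = k' + 2 := ⟨k - 2, by omega⟩
  refine (congrArg _ (Finset.sum_eq_zero fun v _ => Finset.sum_eq_zero fun w _ => ?_)).trans
    (smul_zero _)
  rw [iterD_omegaY_eq_zero, mul_zero, smul_zero]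

lemma moyalTerm_one_omegaY_left (j : Fin (2 * n)) (c : Wc (2 * n)) :
    moyalTerm yD (stdPi n) 1 (omegaY j) c = (I / 2) • yD j c := by
  simp only [moyalTerm_one, yD_omegaY, ← smul_eq_C_mul, smul_smul]
  rw [Finset.sum_comm]
  simp only [← Finset.sum_smul, sum_stdPi_transpose_mul_stdOmega, neg_smul, ite_smul, one_smul,
    zero_smul, Finset.sum_neg_distrib, Finset.sum_ite_eq', Finset.mem_univ, if_true]
  module

lemma moyalTerm_one_omegaY_right (j : Fin (2 * n)) (c : Wc (2 * n)) :
    moyalTerm yD (stdPi n) 1 c (omegaY j) = (-I / 2) • yD j c := by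
  simp only [moyalTerm_one, yD_omegaY, mul_comm (yD _ c), ← smul_eq_C_mul, smul_smul]
  simp only [← Finset.sum_smul, sum_stdPi_mul_stdOmega, ite_smul, one_smul, zero_smul,
    Finset.sum_ite_eq', Finset.mem_univ, if_true]

lemma moyalTerm_omegaY_sub (k : ℕ) (j : Fin (2 * n)) (c : Wc (2 * n)) :
    moyalTerm yD (stdPi n) k (omegaY j) c - moyalTerm yD (stdPi n) k c (omegaY j)
      = if k = 1 then I • yD j c else 0 := by
  match k with
  | 0 => simp [moyalTerm_zero, mul_comm]
  | 1 =>
    rw [moyalTerm_one_omegaY_left, moyalTerm_one_omegaY_right, if_pos rfl]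
    module
  | k + 2 =>
    rw [moyalTerm_omegaY_left_of_two_le (by omega), moyalTerm_omegaY_right_of_two_le (by omega),
      sub_zero, if_neg (by omega)]

end OmegaY

section Commutator

def hConst {N : ℕ} (c : Wc N) : Wa N := fun m => if m = 0 then c else 0

lemma wmulPi_hConst_left {N : ℕ} (π : Matrix (Fin N) (Fin N) ℂ) (c : Wc N) (a : Wa N)
    (m : ℕ) :
    wmulPi π (hConst c) a m = ∑ k ∈ Finset.range (m + 1), moyalTerm yD π k c (a (m - k)) := by
  simp only [wmulPi, moyalN]
  refine Finset.sum_congr rfl fun k _ => ?_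
  rw [Finset.sum_eq_single 0 (fun l _ hl => by simp [hConst, hl, moyalTerm_zero_left])
    (by simp)]
  simp [hConst]

lemma wmulPi_hConst_right {N : ℕ} (π : Matrix (Fin N) (Fin N) ℂ) (c : Wc N) (a : Wa N)
    (m : ℕ) :
    wmulPi π a (hConst c) m = ∑ k ∈ Finset.range (m + 1), moyalTerm yD π k (a (m - k)) c := by
  simp only [wmulPi, moyalN]
  refine Finset.sum_congr rfl fun k _ => ?_
  rw [Finset.sum_eq_single (m - k) (fun l hl hlk => ?_) (by simp)]
  · simp [hConst]
  · have := Finset.mem_range.mp hl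
    simp [hConst, show m - k - l ≠ 0 by omega, moyalTerm_zero_right]

variable {n : ℕ}

def wcomm (a b : Wa (2 * n)) : Wa (2 * n) := wmul a b - wmul b a

lemma wcomm_add_left (a a' b : Wa (2 * n)) : wcomm (a + a') b = wcomm a b + wcomm a' b := by
  simp only [wcomm, wmul, wmulPi_add_left, wmulPi_add_right]
  abel

lemma wcomm_smul_left (c : ℂ) (a b : Wa (2 * n)) : wcomm (c • a) b = c • wcomm a b := by
  simp only [wcomm, wmul, wmulPi_smul_left, wmulPi_smul_right, smul_sub]

lemma wcomm_neg_left (a b : Wa (2 * n)) : wcomm (-a) b = -wcomm a b := by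
  simpa using wcomm_smul_left (-1) a b

lemma rhoWa_wcomm (a b : Wa (2 * n)) :
    rhoWa (wcomm a b) = wcomm (rhoWa a) b + wcomm a (rhoWa b) := by
  simp only [wcomm, wmul, isLinearMap_rhoWa.map_sub, rhoWa_wmulPi]
  abel

lemma oydxW_singleton (j : Fin (2 * n)) : oydxW n {j} = hConst (omegaY j) := by
  funext m
  by_cases hm : m = 0
  · simp [oydxW, hConst, omegaY, hm]
  · simp [oydxW, hConst, hm]

lemma wcomm_hConst_omegaY (j : Fin (2 * n)) (a : Wa (2 * n)) :
    wcomm (hConst (omegaY j)) a = I • hM (yDa j a) := by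
  funext m
  rw [wcomm, Pi.sub_apply, wmul, wmul, wmulPi_hConst_left, wmulPi_hConst_right,
    ← Finset.sum_sub_distrib]
  simp only [moyalTerm_omegaY_sub, Finset.sum_ite_eq', Finset.mem_range]
  cases m with
  | zero => simp [hM]
  | succ m => simp [hM, yDa]

end Commutator

section FlatComponent

variable {n : ℕ}

lemma rhoWa_flat_component {j : Fin (2 * n)} {R U V : Wa (2 * n)}
    (H : -yDa j U + V + I • hInv (wcomm R U) = 0) :
    -yDa j (rhoWa U) + rhoWa V + I • hInv (wcomm R (rhoWa U))
      = I • hInv (wcomm (-(rhoWa R + I • R + (I / 2) • oydxW n {j})) U) := by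
  have hρ := congrArg rhoWa H
  simp only [isLinearMap_rhoWa.map_add, isLinearMap_rhoWa.map_neg, isLinearMap_rhoWa.map_smul,
    isLinearMap_rhoWa.map_zero, rhoWa_yDa, rhoWa_hInv, rhoWa_wcomm,
    isLinearMap_hInv.map_add] at hρ
  rw [wcomm_neg_left, wcomm_add_left, wcomm_add_left, wcomm_smul_left, wcomm_smul_left,
    oydxW_singleton, wcomm_hConst_omegaY]
  simp only [isLinearMap_hInv.map_neg, isLinearMap_hInv.map_add, isLinearMap_hInv.map_smul,
    hInv_hM]
  linear_combination (norm := module) hρ + Complex.I_mul_I • ((I / 2) • yDa j U)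

end FlatComponent

section Forms

variable {n : ℕ}

lemma coeff_xD (i : Fin (2 * n)) (f : Pt n → Wa (2 * n)) (x : Pt n) (m : ℕ)
    (β : Fin (2 * n) →₀ ℕ) :
    coeff β (xD i f x m) = fderiv ℝ (fun x' => coeff β (f x' m)) x (Pi.single i 1) := rfl

lemma xD_zero (i : Fin (2 * n)) (x : Pt n) : xD i (0 : Pt n → Wa (2 * n)) x = 0 := by
  funext m
  ext β
  simp [coeff_xD]

lemma xD_rhoW (a : WF n) (S : Finset (Fin (2 * n))) (j : Fin (2 * n)) (x : Pt n) :
    xD j (rhoW a S) x = rhoWa (xD j (a S) x) := by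
  funext m
  ext β
  have hρ : (fun x' => coeff β (rhoW a S x' m))
      = (-I * m + eulerEigenvalue β) • fun x' => coeff β (a S x' m) := by
    funext x'
    simp only [rhoW, map_add, coeff_smul, coeff_EulW, Pi.smul_apply, smul_eq_mul]
    ring
  simp only [rhoWa, map_add, coeff_smul, coeff_EulW, coeff_xD]
  rw [hρ, fderiv_const_smul_field, Pi.smul_apply, smul_apply, smul_eq_mul, add_mul]

lemma isForm_deltaW {q : ℕ} {a : WF n} (ha : isForm q a) : isForm (q + 1) (deltaW a) := by
  intro S hS
  funext x
  refine Finset.sum_eq_zero fun i hi => ?_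
  have := Finset.card_pos.mpr ⟨i, hi⟩
  rw [ha (S.erase i) (by rw [Finset.card_erase_of_mem hi]; omega), Pi.zero_apply]
  funext m
  simp [yDa, (isLinearMap_yD i).map_zero]

lemma isForm_extD {q : ℕ} {a : WF n} (ha : isForm q a) : isForm (q + 1) (extD a) := by
  intro S hS
  funext x
  refine Finset.sum_eq_zero fun i hi => ?_
  have := Finset.card_pos.mpr ⟨i, hi⟩
  rw [ha (S.erase i) (by rw [Finset.card_erase_of_mem hi]; omega), xD_zero, smul_zero]

lemma isForm_wMulF {p q : ℕ} {a b : WF n} (ha : isForm p a) (hb : isForm q b) :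
    isForm (p + q) (wMulF a b) := by
  intro S hS
  funext x
  refine Finset.sum_eq_zero fun S₁ hS₁ => ?_
  have hcard := Finset.card_sdiff_add_card_eq_card (Finset.mem_powerset.mp hS₁)
  by_cases h₁ : S₁.card = p
  · rw [hb (S \ S₁) (by omega), Pi.zero_apply, wmul, wmulPi_zero_right, smul_zero]
  · rw [ha S₁ h₁, Pi.zero_apply, wmul, wmulPi_zero_left, smul_zero]

lemma isForm_comm1 {q : ℕ} {r a : WF n} (hr : isForm 1 r) (ha : isForm q a) :
    isForm (q + 1) (comm1 r a) := by
  intro S hS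
  funext x
  rw [comm1, isForm_wMulF hr ha S (by omega), isForm_wMulF ha hr S hS]
  simp

lemma isForm_fedD {q : ℕ} {r a : WF n} (hr : isForm 1 r) (ha : isForm q a) :
    isForm (q + 1) (fedD r a) := by
  intro S hS
  funext x
  rw [fedD, isForm_deltaW ha S hS, isForm_extD ha S hS, isForm_comm1 hr ha S hS]
  simp [isLinearMap_hInv.map_zero]

lemma isForm_rhoW {q : ℕ} {a : WF n} (ha : isForm q a) : isForm q (rhoW a) := by
  intro S hS
  funext x m
  simp [rhoW, ha S hS, isLinearMap_EulW.map_zero]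

lemma oydxW_of_card_ne_one {S : Finset (Fin (2 * n))} (hS : S.card ≠ 1) : oydxW n S = 0 := by
  funext m
  have : ∀ j, S ≠ {j} := fun j h => hS (by rw [h, Finset.card_singleton])
  simp [oydxW, this]

lemma K0_apply (r : WF n) (S : Finset (Fin (2 * n))) (x : Pt n) :
    K0 r S x = -(rhoWa (r S x) + I • r S x + (I / 2) • oydxW n S) := by
  rw [K0, rhoWa_eq_hM_hD_add_EulWa, neg_smul]
  abel

lemma isForm_K0 {r : WF n} (hr : isForm 1 r) : isForm 1 (K0 r) := by
  intro S hS
  funext x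
  rw [K0_apply, hr S hS, oydxW_of_card_ne_one hS]
  simp [isLinearMap_rhoWa.map_zero]

lemma insSign_singleton (j : Fin (2 * n)) : insSign {j} j = 1 := by
  rw [insSign, Finset.filter_singleton, if_neg (lt_irrefl j), Finset.card_empty, pow_zero]

lemma deltaW_singleton (a : WF n) (j : Fin (2 * n)) (x : Pt n) :
    deltaW a {j} x = yDa j (a ∅ x) := by
  simp [deltaW, insSign_singleton]

lemma extD_singleton (a : WF n) (j : Fin (2 * n)) (x : Pt n) :
    extD a {j} x = xD j (a ∅) x := by
  simp [extD, insSign_singleton]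

lemma wMulF_singleton (a b : WF n) (j : Fin (2 * n)) (x : Pt n) :
    wMulF a b {j} x = wmul (a ∅ x) (b {j} x) + wmul (a {j} x) (b ∅ x) := by
  have hpow : ({j} : Finset (Fin (2 * n))).powerset = {∅, {j}} := by
    ext s
    simp [Finset.subset_singleton_iff]
  simp [wMulF, hpow, Finset.sum_pair (Finset.singleton_ne_empty j).symm, shuffleSign]

lemma comm1_singleton {r a : WF n} (hr : isForm 1 r) (ha : isForm 0 a)
    (j : Fin (2 * n)) (x : Pt n) : comm1 r a {j} x = wcomm (r {j} x) (a ∅ x) := by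
  rw [comm1, wMulF_singleton, wMulF_singleton, hr ∅ (by simp), ha {j} (by simp)]
  simp [wcomm, wmul, wmulPi_zero_right]

lemma fedD_singleton {r a : WF n} (hr : isForm 1 r) (ha : isForm 0 a)
    (j : Fin (2 * n)) (x : Pt n) :
    fedD r a {j} x = -yDa j (a ∅ x) + xD j (a ∅) x + I • hInv (wcomm (r {j} x) (a ∅ x)) := by
  rw [fedD, deltaW_singleton, extD_singleton, comm1_singleton hr ha]

end Forms

end

theorem D_rho_eq_K0_commutator_general (n : ℕ) (r u : WF n)
    (hr : isForm 1 r)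
    (hu : isForm 0 u) (hflat : fedD r u = 0) :
    fedD r (rhoW u) = fun S x => Complex.I • hInv (comm1 (K0 r) u S x) := by
  funext S x
  by_cases hS : S.card = 1
  · obtain ⟨j, rfl⟩ := Finset.card_eq_one.mp hS
    have hflat_j := congrFun (congrFun hflat {j}) x
    rw [fedD_singleton hr hu] at hflat_j
    rw [fedD_singleton hr (isForm_rhoW hu), comm1_singleton (isForm_K0 hr) hu, rhoW_apply,
      xD_rhoW, K0_apply]
    exact rhoWa_flat_component hflat_j
  · rw [isForm_fedD hr (isForm_rhoW hu) S hS, isForm_comm1 (isForm_K0 hr) hu S hS,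
      Pi.zero_apply, isLinearMap_hInv.map_zero, smul_zero]

/-- Let `r` be a `W`-valued 1-form, `D = −δ + d + (i/ℏ)[r,·]`, and
`ũ` a flat `W`-valued 0-form.  With `ρ(ũ) = (ℏ/i)∂ũ/∂ℏ + Eũ` and
`K₀ = −(Er − iℏ ∂r/∂ℏ + i r + (i/2) Σ ω_{ij} y^i dx^j)`:
`D(ρ(ũ)) = (i/ℏ)[K₀, ũ]`. -/
theorem D_rho_eq_K0_commutator (n : ℕ) (r u : WF n)
    (hr : isForm 1 r) (hrs : WF.Smooth r)
    (hu : isForm 0 u) (hus : WF.Smooth u) (hflat : fedD r u = 0) :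
    fedD r (rhoW u) = fun S x => Complex.I • hInv (comm1 (K0 r) u S x) :=
  D_rho_eq_K0_commutator_general n r u hr hu hflat

end StarPaper
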